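/- Let F be a field of characteristic 5. Then there exist 10 pairwise distinct lines in ℙ²(F) having exactly 13 triple points, exactly 6 double points, and no point of multiplicity greater than 3. Explicitly, the lines x = 0, y = 0, z = 0, 3x+y+z = 0, x+3y+z = 0, 2x+2y+z = 0, x+y+z = 0, 2x+4y = 0, 3y+z = 0, 2x+z = 0 form such a configuration. -/

import Mathlib

/-! All ten lines are defined over the prime field `𝔽₅`, so the configuration is the base change
of a configuration of lines in `ℙ²(𝔽₅)` along `𝔽₅ → F`. Base change preserves incidence, hence
the multiplicity of every `𝔽₅`-point. A point of multiplicity at least `2` lies on two distinct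
lines defined over `𝔽₅`, so it is (the class of) their cross product and is itself an
`𝔽₅`-point. The counts therefore reduce to a finite computation in `ℙ²(𝔽₅)`. -/

/-- The projective plane over `F` (also used, by duality, for the lines of that plane). -/
abbrev ProjPlane (F : Type*) [Field F] := Projectivization F (Fin 3 → F)

/-- The point `P` lies on the line `L` (a line is recorded by the projective class of the
coefficient vector of a defining linear form): the pairing of representatives vanishes.
This does not depend on the choice of representatives. -/
def OnLine {F : Type*} [Field F] (P L : ProjPlane F) : Prop :=
  dotProduct P.rep L.rep = 0

/-- The multiplicity of a point `P` with respect to a configuration `lines`: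
the number of lines of the configuration passing through `P`. -/
noncomputable def mult {F : Type*} [Field F] (lines : Set (ProjPlane F))
    (P : ProjPlane F) : ℕ :=
  {L ∈ lines | OnLine P L}.ncard

/-- A vector with a nonzero coordinate is nonzero. -/
lemma vec_ne_zero {F : Type*} [Field F] (c : Fin 3 → F) (i : Fin 3) (h : c i ≠ 0) :
    c ≠ 0 := fun h0 => h (by rw [h0]; rfl)

open Projectivization Finset Matrix

section BaseChange

variable {K F : Type*} [Field K] [Field F]

lemma onLine_iff_orthogonal (P L : ProjPlane F) : OnLine P L ↔ P.orthogonal L := by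
  conv_rhs => rw [← P.mk_rep, ← L.mk_rep, orthogonal_mk]
  rfl

def RingHom.compLeftₛₗ (φ : K →+* F) : (Fin 3 → K) →ₛₗ[φ] (Fin 3 → F) where
  toFun v := φ ∘ v
  map_add' _ _ := by ext; simp
  map_smul' _ _ := by ext; simp

lemma RingHom.compLeftₛₗ_injective (φ : K →+* F) : Function.Injective φ.compLeftₛₗ :=
  φ.injective.comp_left

def ProjPlane.map (φ : K →+* F) : ProjPlane K → ProjPlane F :=
  Projectivization.map φ.compLeftₛₗ φ.compLeftₛₗ_injective

variable (φ : K →+* F)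

lemma RingHom.comp_ne_zero {v : Fin 3 → K} (hv : v ≠ 0) : φ ∘ v ≠ 0 :=
  φ.compLeftₛₗ_injective.ne_iff' (map_zero _) |>.2 hv

lemma ProjPlane.map_mk (v : Fin 3 → K) (hv : v ≠ 0) :
    ProjPlane.map φ (mk K v hv) = mk F (φ ∘ v) (φ.comp_ne_zero hv) :=
  rfl

lemma RingHom.comp_crossProduct (v w : Fin 3 → K) : φ ∘ (v ⨯₃ w) = (φ ∘ v) ⨯₃ (φ ∘ w) := by
  ext i
  fin_cases i <;> simp [cross_apply]

lemma ProjPlane.map_injective : Function.Injective (ProjPlane.map φ) := by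
  intro P Q h
  induction P using ind with | h v hv =>
  induction Q using ind with | h w hw =>
  rw [map_mk, map_mk, mk_eq_mk_iff_crossProduct_eq_zero, ← φ.comp_crossProduct] at h
  rwa [mk_eq_mk_iff_crossProduct_eq_zero, ← φ.compLeftₛₗ_injective.eq_iff' (map_zero _)]

lemma orthogonal_map_map_iff (P L : ProjPlane K) :
    (ProjPlane.map φ P).orthogonal (ProjPlane.map φ L) ↔ P.orthogonal L := by
  induction P using ind with | h v hv =>
  induction L using ind with | h w hw =>
  rw [ProjPlane.map_mk, ProjPlane.map_mk, orthogonal_mk, orthogonal_mk, ← RingHom.map_dotProduct,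
    map_eq_zero_iff φ φ.injective]

lemma onLine_map_map_iff (P L : ProjPlane K) :
    OnLine (ProjPlane.map φ P) (ProjPlane.map φ L) ↔ OnLine P L := by
  rw [onLine_iff_orthogonal, onLine_iff_orthogonal, orthogonal_map_map_iff]

lemma exists_map_eq_of_orthogonal {P : ProjPlane F} {L L' : ProjPlane K} (hne : L ≠ L')
    (hL : P.orthogonal (ProjPlane.map φ L)) (hL' : P.orthogonal (ProjPlane.map φ L')) :
    ∃ Q, ProjPlane.map φ Q = P := by
  induction P using ind with | h p hp =>
  induction L using ind with | h l hl =>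
  induction L' using ind with | h l' hl' =>
  rw [ProjPlane.map_mk, orthogonal_mk] at hL hL'
  have hll' := mt (mk_eq_mk_iff_crossProduct_eq_zero hl hl').2 hne
  refine ⟨mk K (l ⨯₃ l') hll', ?_⟩
  -- `(l ⨯₃ l') ⨯₃ p = (l ⬝ᵥ p) • l' - (l' ⬝ᵥ p) • l` vanishes, i.e. `p` is parallel to `l ⨯₃ l'`.
  rw [ProjPlane.map_mk, mk_eq_mk_iff_crossProduct_eq_zero, φ.comp_crossProduct,
    cross_cross_eq_smul_sub_smul, dotProduct_comm _ p, dotProduct_comm _ p, hL, hL', zero_smul,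
    zero_smul, sub_zero]

variable (S : Set (ProjPlane K))

lemma mult_image_map (Q : ProjPlane K) :
    mult (ProjPlane.map φ '' S) (ProjPlane.map φ Q) = mult S Q := by
  have hlines : {L ∈ ProjPlane.map φ '' S | OnLine (ProjPlane.map φ Q) L} =
      ProjPlane.map φ '' {L ∈ S | OnLine Q L} := by
    ext L
    constructor
    · rintro ⟨⟨L₀, hL₀, rfl⟩, hQ⟩
      exact ⟨L₀, ⟨hL₀, (onLine_map_map_iff φ Q L₀).1 hQ⟩, rfl⟩
    · rintro ⟨L₀, ⟨hL₀, hQ⟩, rfl⟩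
      exact ⟨⟨L₀, hL₀, rfl⟩, (onLine_map_map_iff φ Q L₀).2 hQ⟩
  rw [mult, mult, hlines, Set.ncard_image_of_injective _ (ProjPlane.map_injective φ)]

lemma mem_range_map_of_two_le_mult {P : ProjPlane F} (h : 2 ≤ mult (ProjPlane.map φ '' S) P) :
    P ∈ Set.range (ProjPlane.map φ) := by
  obtain ⟨_, ⟨⟨L, -, rfl⟩, hL⟩, _, ⟨⟨L', -, rfl⟩, hL'⟩, hne⟩ :=
    (Set.one_lt_ncard (Set.finite_of_ncard_pos (by unfold mult at h; omega))).1 h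
  rw [onLine_iff_orthogonal] at hL hL'
  exact exists_map_eq_of_orthogonal φ (ne_of_apply_ne _ hne) hL hL'

lemma ncard_setOf_mult_image_map {k : ℕ} (hk : 2 ≤ k) :
    {P | mult (ProjPlane.map φ '' S) P = k}.ncard = {Q | mult S Q = k}.ncard := by
  have himage :
      {P | mult (ProjPlane.map φ '' S) P = k} = ProjPlane.map φ '' {Q | mult S Q = k} := by
    ext P
    constructor
    · intro hP
      obtain ⟨Q, rfl⟩ := mem_range_map_of_two_le_mult φ S (hk.trans_eq hP.symm)
      exact ⟨Q, (mult_image_map φ S Q).symm.trans hP, rfl⟩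
    · rintro ⟨Q, hQ, rfl⟩
      exact (mult_image_map φ S Q).trans hQ
  rw [himage, Set.ncard_image_of_injective _ (ProjPlane.map_injective φ)]

lemma mult_image_map_le {k : ℕ} (hk : 2 ≤ k) (h : ∀ Q, mult S Q ≤ k) (P : ProjPlane F) :
    mult (ProjPlane.map φ '' S) P ≤ k := by
  by_cases hP : 2 ≤ mult (ProjPlane.map φ '' S) P
  · obtain ⟨Q, rfl⟩ := mem_range_map_of_two_le_mult φ S hP
    exact (mult_image_map φ S Q).trans_le (h Q)
  · omega

end BaseChange

section Decidable

variable {F : Type*} [Field F] [DecidableEq F]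

instance : DecidableEq (ProjPlane F) := fun P Q =>
  Quotient.recOnSubsingleton₂ P Q fun v w =>
    decidable_of_iff _ (mk_eq_mk_iff_crossProduct_eq_zero v.2 w.2).symm

instance (P L : ProjPlane F) : Decidable (P.orthogonal L) :=
  Quotient.recOnSubsingleton₂ P L fun v w => decidable_of_iff _ (orthogonal_mk v.2 w.2).symm

instance [Fintype F] : Fintype (ProjPlane F) :=
  Fintype.ofSurjective (mk' F) Quotient.mk''_surjective

lemma mult_coe_finset (S : Finset (ProjPlane F)) (P : ProjPlane F) :
    mult ↑S P = #{L ∈ S | P.orthogonal L} := by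
  simp only [mult, onLine_iff_orthogonal, ← Set.ncard_coe_finset, coe_filter, mem_coe]

lemma ncard_setOf_mult_coe_finset [Fintype F] (S : Finset (ProjPlane F)) (k : ℕ) :
    {P | mult (S : Set (ProjPlane F)) P = k}.ncard =
      #{P : ProjPlane F | #{L ∈ S | P.orthogonal L} = k} := by
  simp only [mult_coe_finset, ← Set.ncard_coe_finset, coe_filter, mem_univ, true_and]

end Decidable

instance fact_prime_five : Fact (Nat.Prime 5) := ⟨Nat.prime_five⟩

def tenLines (F : Type*) [Field F] [DecidableEq F] [CharP F 5] : Finset (ProjPlane F) :=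
  {mk F ![1, 0, 0] (vec_ne_zero _ 0 one_ne_zero), mk F ![0, 1, 0] (vec_ne_zero _ 1 one_ne_zero),
   mk F ![0, 0, 1] (vec_ne_zero _ 2 one_ne_zero), mk F ![3, 1, 1] (vec_ne_zero _ 1 one_ne_zero),
   mk F ![1, 3, 1] (vec_ne_zero _ 0 one_ne_zero), mk F ![2, 2, 1] (vec_ne_zero _ 2 one_ne_zero),
   mk F ![1, 1, 1] (vec_ne_zero _ 0 one_ne_zero),
   mk F ![2, 4, 0]
     (vec_ne_zero _ 0 ((CharP.isUnit_ofNat_iff Nat.prime_five).2 (by norm_num)).ne_zero),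
   mk F ![0, 3, 1] (vec_ne_zero _ 2 one_ne_zero), mk F ![2, 0, 1] (vec_ne_zero _ 2 one_ne_zero)}

lemma Matrix.comp_vecCons {α β : Type*} {n : ℕ} (f : α → β) (a : α) (v : Fin n → α) :
    f ∘ vecCons a v = vecCons (f a) (f ∘ v) :=
  Fin.comp_cons f a v

lemma image_map_tenLines {K F : Type*} [Field K] [DecidableEq K] [CharP K 5] [Field F]
    [DecidableEq F] [CharP F 5] (φ : K →+* F) :
    ProjPlane.map φ '' ↑(tenLines K) = ↑(tenLines F) := by
  simp [tenLines, Set.image_insert_eq, ProjPlane.map_mk, comp_vecCons, Matrix.empty_eq,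
    map_ofNat]

lemma card_tenLines_zmod : #(tenLines (ZMod 5)) = 10 := by
  decide

lemma ncard_setOf_mult_tenLines_zmod_eq_three :
    {P | mult (tenLines (ZMod 5) : Set (ProjPlane (ZMod 5))) P = 3}.ncard = 13 := by
  rw [ncard_setOf_mult_coe_finset]
  decide +kernel

lemma ncard_setOf_mult_tenLines_zmod_eq_two :
    {P | mult (tenLines (ZMod 5) : Set (ProjPlane (ZMod 5))) P = 2}.ncard = 6 := by
  rw [ncard_setOf_mult_coe_finset]
  decide +kernel

lemma mult_tenLines_zmod_le (P : ProjPlane (ZMod 5)) :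
    mult (tenLines (ZMod 5) : Set (ProjPlane (ZMod 5))) P ≤ 3 := by
  rw [mult_coe_finset]
  revert P
  decide +kernel

/-- Over every field of characteristic `5` there are `10` pairwise distinct lines in `ℙ²(F)`
with exactly `13` triple points, exactly `6` double points and no point of multiplicity
greater than `3`; explicitly the lines
`x`, `y`, `z`, `3x+y+z`, `x+3y+z`, `2x+2y+z`, `x+y+z`, `2x+4y`, `3y+z`, `2x+z`. -/
theorem ten_lines_char_five (F : Type*) [Field F] [CharP F 5] :
    ∃ lines : Set (ProjPlane F),
      lines = {Projectivization.mk F ![1, 0, 0] (vec_ne_zero _ 0 (by simp)),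
               Projectivization.mk F ![0, 1, 0] (vec_ne_zero _ 1 (by simp)),
               Projectivization.mk F ![0, 0, 1] (vec_ne_zero _ 2 (by simp)),
               Projectivization.mk F ![3, 1, 1] (vec_ne_zero _ 1 (by simp)),
               Projectivization.mk F ![1, 3, 1] (vec_ne_zero _ 0 (by simp)),
               Projectivization.mk F ![2, 2, 1] (vec_ne_zero _ 2 (by simp)),
               Projectivization.mk F ![1, 1, 1] (vec_ne_zero _ 0 (by simp)),
               Projectivization.mk F ![2, 4, 0] (vec_ne_zero _ 0 (by
                  intro h
                  have h2 : ((2 : ℕ) : F) = 0 := by exact_mod_cast h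
                  have := (CharP.cast_eq_zero_iff F 5 2).mp h2
                  norm_num at this)),
               Projectivization.mk F ![0, 3, 1] (vec_ne_zero _ 2 (by simp)),
               Projectivization.mk F ![2, 0, 1] (vec_ne_zero _ 2 (by simp))} ∧
      lines.ncard = 10 ∧
      {P : ProjPlane F | mult lines P = 3}.ncard = 13 ∧
      {P : ProjPlane F | mult lines P = 2}.ncard = 6 ∧
      ∀ P : ProjPlane F, mult lines P ≤ 3 := by
  classical
  let φ := ZMod.castHom (dvd_refl 5) F
  refine ⟨↑(tenLines F), by simp only [tenLines, coe_insert, coe_singleton], ?_⟩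
  rw [← image_map_tenLines φ]
  refine ⟨?_, ?_, ?_, mult_image_map_le φ _ (by norm_num) mult_tenLines_zmod_le⟩
  · rw [Set.ncard_image_of_injective _ (ProjPlane.map_injective φ), Set.ncard_coe_finset]
    exact card_tenLines_zmod
  · rw [ncard_setOf_mult_image_map φ _ (by norm_num)]
    exact ncard_setOf_mult_tenLines_zmod_eq_three
  · rw [ncard_setOf_mult_image_map φ _ le_rfl]
    exact ncard_setOf_mult_tenLines_zmod_eq_two
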